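/- Let T be a right R-module with S = End(T_R). If X is a right R-module lying in cogen*(T) — i.e., there is an exact sequence 0 → X → T^0 → T^1 → ⋯ with each T^i ∈ add(T) and Ext^1_R(coker, T) = 0 at each stage — then the natural evaluation map π_X : X → Hom_S(Hom_R(X,T), T) is an isomorphism. -/

import Mathlib

noncomputable section
open CategoryTheory

universe u

/-- Vanishing of `Ext^i_A(M, N)` for `A`-modules `M`, `N`. -/
def extVanish (A : Type u) [Ring A] (i : ℕ) (M N : Type u) [AddCommGroup M] [Module A M]
    [AddCommGroup N] [Module A N] : Prop :=
  Subsingleton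
    (((Ext ℤ (ModuleCat.{u} A) i).obj (Opposite.op (ModuleCat.of A M))).obj (ModuleCat.of A N))

/-- `M` is a direct summand of a finite direct sum of copies of `T`, i.e. `M ∈ add T`. -/
def InAdd (A : Type u) [Ring A] (T : Type u) [AddCommGroup T] [Module A T]
    (M : Type u) [AddCommGroup M] [Module A M] : Prop :=
  ∃ (n : ℕ) (ι : M →ₗ[A] (Fin n → T)) (π : (Fin n → T) →ₗ[A] M), π ∘ₗ ι = LinearMap.id

/-- `X ∈ cogen*(T)`: there is an exact coresolution `0 → X → T⁰ → T¹ → ⋯` with each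
`Tⁱ ∈ add T` and `Ext¹(coker, T) = 0` at every stage. -/
def InCogenStar (A : Type u) [Ring A] (T : Type u) [AddCommGroup T] [Module A T]
    (X : Type u) [AddCommGroup X] [Module A X] : Prop :=
  ∃ (C : ℕ → ModuleCat.{u} A) (f : X →ₗ[A] C 0) (d : ∀ n, C n →ₗ[A] C (n + 1)),
    (∀ n, InAdd A T (C n)) ∧
    Function.Injective f ∧
    Function.Exact f (d 0) ∧
    (∀ n, Function.Exact (d n) (d (n + 1))) ∧
    extVanish A 1 ((C 0) ⧸ LinearMap.range f) T ∧
    (∀ n, extVanish A 1 ((C (n + 1)) ⧸ LinearMap.range (d n)) T)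

/-- The natural evaluation map `π_X : X → Hom_S(Hom_A(X,T), T)`, `x ↦ (g ↦ g x)`, where
`S = End(T)`. -/
def evalMap (A : Type u) [Ring A] (T : Type u) [AddCommGroup T] [Module A T]
    (X : Type u) [AddCommGroup X] [Module A X] (x : X) :
    (X →ₗ[A] T) →ₗ[Module.End A T] T where
  toFun g := g x
  map_add' g h := rfl
  map_smul' s g := rfl

/-!
`π` is natural and bijective on `Tⁿ`, hence on its retracts, i.e. on `add T`. Given the exact
sequence `0 → X → T⁰ → T¹`, injectivity of `π_X` follows from that of `π_{T⁰}`. A functional `φ`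
on `Hom(X, T)` pulls back to one on `Hom(T⁰, T)`, which is `π_{T⁰} c`; injectivity of `π_{T¹}`
forces `d c = 0`, so `c` lies in `X`, and `π_X c = φ` because `Ext¹(T⁰/X, T) = 0` lets every map
`X → T` extend to `T⁰`. That extension is read off a projective resolution of `T⁰/X`: the vanishing
of `Ext¹` makes the induced cocycle a coboundary, and `T⁰` is a pushout of the resolution.
-/

section Extension

open Function LinearMap

variable {A : Type*} [Ring A] {X C Y P₀ P₁ T : Type*} [AddCommGroup X] [Module A X]
  [AddCommGroup C] [Module A C] [AddCommGroup Y] [Module A Y] [AddCommGroup P₀] [Module A P₀]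
  [AddCommGroup P₁] [Module A P₁] [AddCommGroup T] [Module A T]

theorem Function.Exact.exists_comp_eq_of_comp_eq_zero {f : X →ₗ[A] C} {q : C →ₗ[A] Y}
    (hf : Injective f) (hfq : Exact f q) {k : P₁ →ₗ[A] C} (hk : q ∘ₗ k = 0) :
    ∃ β : P₁ →ₗ[A] X, f ∘ₗ β = k := by
  have hk' : ∀ p, k p ∈ range f := fun p => (hfq (k p)).1 (LinearMap.congr_fun hk p)
  exact ⟨(LinearEquiv.ofInjective f hf).symm ∘ₗ k.codRestrict _ hk', by ext p; simp⟩

theorem LinearMap.exists_comp_eq_of_ker_le {Φ : P₀ →ₗ[A] C} (hΦ : Surjective Φ)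
    {G : P₀ →ₗ[A] T} (h : ker Φ ≤ ker G) : ∃ g : C →ₗ[A] T, g ∘ₗ Φ = G :=
  ⟨(ker Φ).liftQ G h ∘ₗ (Φ.quotKerEquivOfSurjective hΦ).symm, by ext; simp⟩

-- `C` is the pushout of `P₀ ← P₁ → X` along `d` and `β`, with structure maps `α` and `f`.
theorem exists_comp_eq_of_coboundary {f : X →ₗ[A] C} (hf : Injective f) {q : C →ₗ[A] Y}
    (hfq : Exact f q) {d : P₁ →ₗ[A] P₀} {ε : P₀ →ₗ[A] Y} (hε : Surjective ε) (hdε : Exact d ε)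
    {α : P₀ →ₗ[A] C} (hα : q ∘ₗ α = ε) {β : P₁ →ₗ[A] X} (hβ : f ∘ₗ β = α ∘ₗ d)
    {g : X →ₗ[A] T} {h : P₀ →ₗ[A] T} (hh : h ∘ₗ d = g ∘ₗ β) :
    ∃ g' : C →ₗ[A] T, g' ∘ₗ f = g := by
  have hα' : ∀ p, q (α p) = ε p := LinearMap.congr_fun hα
  have hβ' : ∀ p, f (β p) = α (d p) := LinearMap.congr_fun hβ
  have hh' : ∀ p, h (d p) = g (β p) := LinearMap.congr_fun hh
  have hsurj : Surjective (α.coprod f) := by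
    intro c
    obtain ⟨p, hp⟩ := hε (q c)
    obtain ⟨x, hx⟩ := (hfq (c - α p)).1 (by rw [map_sub, hα', hp, sub_self])
    exact ⟨(p, x), by simp [hx]⟩
  have hker : ker (α.coprod f) ≤ ker (h.coprod g) := by
    rintro ⟨p, x⟩ hpx
    simp only [mem_ker, coprod_apply] at hpx ⊢
    obtain ⟨p₁, rfl⟩ := (hdε p).1 <| by
      rw [← hα', eq_neg_of_add_eq_zero_left hpx, map_neg, hfq.apply_apply_eq_zero, neg_zero]
    obtain rfl : x = -β p₁ := hf <| by
      rw [map_neg, hβ', eq_neg_iff_add_eq_zero, add_comm, hpx]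
    rw [hh', map_neg, add_neg_cancel]
  obtain ⟨g', hg'⟩ := exists_comp_eq_of_ker_le hsurj hker
  exact ⟨g', LinearMap.ext fun x => by simpa using LinearMap.congr_fun hg' (0, x)⟩

end Extension

section ExtVanish

open Function LinearMap

variable {A : Type u} [Ring A] {T : Type u} [AddCommGroup T] [Module A T]

theorem CategoryTheory.ProjectiveResolution.exists_d_comp_eq_of_extVanish {M : Type u}
    [AddCommGroup M] [Module A M] (P : ProjectiveResolution (ModuleCat.of A M))
    (hM : extVanish A 1 M T) (u : P.complex.X 1 ⟶ ModuleCat.of A T) (hu : P.complex.d 2 1 ≫ u = 0) :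
    ∃ h : P.complex.X 0 ⟶ ModuleCat.of A T, P.complex.d 1 0 ≫ h = u := by
  set K := P.complex.linearYonedaObj ℤ (ModuleCat.of A T)
  have hK : K.ExactAt 1 := (HomologicalComplex.exactAt_iff_isZero_homology K 1).2 <|
    (@ModuleCat.isZero_of_subsingleton _ _ _ hM).of_iso (P.isoExt 1 _).symm
  rw [HomologicalComplex.exactAt_iff' K 0 1 2 (by simp) (by simp),
    ShortComplex.moduleCat_exact_iff] at hK
  exact hK u hu

theorem exists_comp_eq_of_extVanish {X C : Type u} [AddCommGroup X] [Module A X]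
    [AddCommGroup C] [Module A C] {f : X →ₗ[A] C} (hf : Injective f)
    (hext : extVanish A 1 (C ⧸ range f) T) (g : X →ₗ[A] T) :
    ∃ g' : C →ₗ[A] T, g' ∘ₗ f = g := by
  obtain ⟨P⟩ := HasProjectiveResolution.out (Z := ModuleCat.of A (C ⧸ range f))
  have hε : Surjective (P.π.f 0) := (ModuleCat.epi_iff_surjective _).1 inferInstance
  have hdε : Exact (P.complex.d 1 0) (P.π.f 0) :=
    (ShortComplex.ShortExact.moduleCat_exact_iff_function_exact _).1 P.exact₀
  have hfq := exact_map_mkQ_range f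
  obtain ⟨α, hα⟩ : ∃ α : P.complex.X 0 ⟶ ModuleCat.of A C,
      (range f).mkQ ∘ₗ α.hom = (P.π.f 0).hom := by
    let ε : P.complex.X 0 ⟶ ModuleCat.of A (C ⧸ range f) := P.π.f 0
    let q : ModuleCat.of A C ⟶ ModuleCat.of A (C ⧸ range f) := ModuleCat.ofHom (range f).mkQ
    have : Epi q := (ModuleCat.epi_iff_surjective _).2 (Submodule.mkQ_surjective _)
    exact ⟨Projective.factorThru ε q,
      congrArg ModuleCat.Hom.hom (Projective.factorThru_comp ε q)⟩
  obtain ⟨β, hβ⟩ :=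
      hfq.exists_comp_eq_of_comp_eq_zero hf (k := α.hom ∘ₗ (P.complex.d 1 0).hom) <| by
    rw [← LinearMap.comp_assoc, hα]
    exact congrArg ModuleCat.Hom.hom P.complex_d_comp_π_f_zero
  obtain ⟨h, hh⟩ := P.exists_d_comp_eq_of_extVanish hext (ModuleCat.ofHom (g ∘ₗ β)) <| by
    ext p
    have : f (β (P.complex.d 2 1 p)) = f 0 :=
      (LinearMap.congr_fun hβ _).trans (by simp [← ConcreteCategory.comp_apply])
    simp [hf this]
  exact exists_comp_eq_of_coboundary hf hfq hε hdε hα hβ (congrArg ModuleCat.Hom.hom hh)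

end ExtVanish

section Evaluation

variable {A : Type u} [Ring A] {T : Type u} [AddCommGroup T] [Module A T]
  {M N P : Type u} [AddCommGroup M] [Module A M] [AddCommGroup N] [Module A N]
  [AddCommGroup P] [Module A P]

def precompEnd (h : M →ₗ[A] N) : (N →ₗ[A] T) →ₗ[Module.End A T] (M →ₗ[A] T) where
  toFun g := g ∘ₗ h
  map_add' g₁ g₂ := LinearMap.add_comp h g₂ g₁
  map_smul' _ _ := rfl

theorem evalMap_apply_eq_comp_precompEnd (h : M →ₗ[A] N) (x : M) :
    evalMap A T N (h x) = evalMap A T M x ∘ₗ precompEnd h :=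
  rfl

theorem evalMap_injective_of_injective {f : M →ₗ[A] N} (hf : Function.Injective f)
    (hN : Function.Injective (evalMap A T N)) : Function.Injective (evalMap A T M) := by
  intro x y hxy
  apply hf (hN _)
  rw [evalMap_apply_eq_comp_precompEnd, evalMap_apply_eq_comp_precompEnd, hxy]

theorem evalMap_surjective_of_exact {f : M →ₗ[A] N} {d : N →ₗ[A] P}
    (hfd : Function.Exact f d) (hN : Function.Surjective (evalMap A T N))
    (hP : Function.Injective (evalMap A T P))
    (hext : ∀ g : M →ₗ[A] T, ∃ g' : N →ₗ[A] T, g' ∘ₗ f = g) :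
    Function.Surjective (evalMap A T M) := by
  intro φ
  obtain ⟨y, hy⟩ := hN (φ ∘ₗ precompEnd f)
  have hdy : d y = 0 := hP <| by
    ext g
    have hgdf : g ∘ₗ d ∘ₗ f = 0 := by rw [hfd.linearMap_comp_eq_zero, LinearMap.comp_zero]
    calc g (d y) = φ (g ∘ₗ d ∘ₗ f) := LinearMap.congr_fun hy (g ∘ₗ d)
      _ = 0 := by rw [hgdf, map_zero]
      _ = evalMap A T P 0 g := (map_zero g).symm
  obtain ⟨x, rfl⟩ := (hfd y).1 hdy
  refine ⟨x, LinearMap.ext fun g => ?_⟩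
  obtain ⟨g', rfl⟩ := hext g
  exact LinearMap.congr_fun hy g'

theorem evalMap_bijective_of_exact {f : M →ₗ[A] N} {d : N →ₗ[A] P}
    (hf : Function.Injective f) (hfd : Function.Exact f d)
    (hN : Function.Bijective (evalMap A T N)) (hP : Function.Injective (evalMap A T P))
    (hext : ∀ g : M →ₗ[A] T, ∃ g' : N →ₗ[A] T, g' ∘ₗ f = g) :
    Function.Bijective (evalMap A T M) :=
  ⟨evalMap_injective_of_injective hf hN.1, evalMap_surjective_of_exact hfd hN.2 hP hext⟩

-- `M` is the kernel of the idempotent `id - ι ∘ p` on `N`.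
theorem evalMap_bijective_of_retract (ι : M →ₗ[A] N) (p : N →ₗ[A] M) (hpι : p ∘ₗ ι = .id)
    (hN : Function.Bijective (evalMap A T N)) : Function.Bijective (evalMap A T M) := by
  have hpι' : ∀ x, p (ι x) = x := LinearMap.congr_fun hpι
  refine evalMap_bijective_of_exact (d := .id - ι ∘ₗ p) (fun x y h => ?_) (fun y => ?_) hN hN.1
    fun g => ⟨g ∘ₗ p, by rw [LinearMap.comp_assoc, hpι, LinearMap.comp_id]⟩
  · rw [← hpι' x, h, hpι']
  · refine ⟨fun h => ⟨p y, ?_⟩, ?_⟩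
    · exact (sub_eq_zero.1 h).symm
    · rintro ⟨x, rfl⟩
      simp [hpι']

theorem LinearMap.sum_comp_single_smul_proj {ι : Type*} [Fintype ι] [DecidableEq ι]
    (g : (ι → T) →ₗ[A] T) :
    ∑ i, (g ∘ₗ LinearMap.single A (fun _ => T) i : Module.End A T) • LinearMap.proj i = g := by
  refine LinearMap.ext fun y => ?_
  conv_rhs => rw [← Finset.univ_sum_single y, map_sum]
  simp [Module.End.smul_def]

theorem evalMap_pi_bijective (ι : Type) [Fintype ι] [DecidableEq ι] :
    Function.Bijective (evalMap A T (ι → T)) := by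
  refine ⟨fun x y h => funext fun i => LinearMap.congr_fun h (LinearMap.proj i), fun φ => ?_⟩
  refine ⟨fun i => φ (LinearMap.proj i), LinearMap.ext fun g => ?_⟩
  calc g (fun i => φ (LinearMap.proj i))
      = ∑ i, g (Pi.single i (φ (LinearMap.proj i))) := by rw [← map_sum, Finset.univ_sum_single]
    _ = φ (∑ i, (g ∘ₗ LinearMap.single A (fun _ => T) i : Module.End A T) • LinearMap.proj i) := by
      simp [map_sum, map_smul, Module.End.smul_def]
    _ = φ g := by rw [LinearMap.sum_comp_single_smul_proj]

theorem evalMap_bijective_of_inAdd (h : InAdd A T M) : Function.Bijective (evalMap A T M) := by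
  obtain ⟨n, ι, p, hpι⟩ := h
  exact evalMap_bijective_of_retract ι p hpι (evalMap_pi_bijective (Fin n))

end Evaluation

/-- Let `T` be a right `R`-module with `S = End(T_R)`.  If `X ∈ cogen*(T)`,
then the natural evaluation map `π_X : X → Hom_S(Hom_R(X,T), T)` is an isomorphism. -/
theorem evalMap_bijective_of_mem_cogenStar (R : Type u) [Ring R]
    (T : Type u) [AddCommGroup T] [Module Rᵐᵒᵖ T]
    (X : Type u) [AddCommGroup X] [Module Rᵐᵒᵖ X]
    (hX : InCogenStar Rᵐᵒᵖ T X) :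
    Function.Bijective (evalMap Rᵐᵒᵖ T X) := by
  obtain ⟨C, f, d, hadd, hf, hfd, -, hext, -⟩ := hX
  exact evalMap_bijective_of_exact hf hfd (evalMap_bijective_of_inAdd (hadd 0))
    (evalMap_bijective_of_inAdd (hadd 1)).1 (exists_comp_eq_of_extVanish hf hext)

end
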